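/- arXiv:2512.12909 — 3 statements merged into one kernel-verified Lean document; each statement's English description precedes it below -/
import Mathlib

section
/- For m ≥ 4, the prism C_m^{□} = C_m □ K_2 is triangle-free, and hence the graph 2K_1 + C_m^{□} (join of two isolated vertices with the prism over a cycle of length m) is K_4-free. -/
open SimpleGraph Matrix Finset

noncomputable def adjM {V : Type*} [Fintype V] [DecidableEq V] (G : SimpleGraph V) :
    Matrix V V ℝ :=
  @SimpleGraph.adjMatrix ℝ V G (Classical.decRel _) _ _

/-- `lam` is the largest eigenvalue (spectral radius) of the adjacency matrix of `G`. -/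
def IsSpecRad {V : Type*} [Fintype V] [DecidableEq V] (G : SimpleGraph V) (lam : ℝ) : Prop :=
  IsGreatest {μ : ℝ | ∃ v : V → ℝ, v ≠ 0 ∧ (adjM G).mulVec v = μ • v} lam
/-- The join of two graphs: all edges between the two vertex sets are added. -/
def joinG {α β : Type*} (G : SimpleGraph α) (H : SimpleGraph β) : SimpleGraph (α ⊕ β) where
  Adj x y :=
    match x, y with
    | Sum.inl a, Sum.inl b => G.Adj a b
    | Sum.inl _, Sum.inr _ => True
    | Sum.inr _, Sum.inl _ => True
    | Sum.inr a, Sum.inr b => H.Adj a b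
  symm := ⟨by
    rintro (a | a) (b | b) h
    · exact G.adj_symm h
    · trivial
    · trivial
    · exact H.adj_symm h⟩
  loopless := ⟨by
    rintro (a | a) h
    · exact G.irrefl h
    · exact H.irrefl h⟩

/-- The cycle `C_m` on `Fin m`. -/
def cycleG (m : ℕ) : SimpleGraph (Fin m) :=
  SimpleGraph.fromRel (fun i j => (i.val + 1) % m = j.val)

/-- The prism `C_m □ K_2`. -/
def prism (m : ℕ) : SimpleGraph (Fin m × Fin 2) :=
  (cycleG m).boxProd (⊤ : SimpleGraph (Fin 2))


lemma modlem {m a b : ℕ} (ha : a < m) (h : (a + 1) % m = b) :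
    a + 1 = b ∨ (a + 1 = m ∧ b = 0) := by
  rcases lt_or_ge (a + 1) m with h' | h'
  · left; rwa [Nat.mod_eq_of_lt h'] at h
  · right
    have hm : a + 1 = m := by omega
    subst b
    simp [hm]

lemma cycle_tri {m : ℕ} (hm : 4 ≤ m) {x y z : Fin m}
    (hxy : (cycleG m).Adj x y) (hxz : (cycleG m).Adj x z)
    (hyz : (cycleG m).Adj y z) : False := by
  simp only [cycleG, SimpleGraph.fromRel_adj] at hxy hxz hyz
  obtain ⟨nxy, hxy⟩ := hxy
  obtain ⟨nxz, hxz⟩ := hxz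
  obtain ⟨nyz, hyz⟩ := hyz
  have hx := x.2; have hy := y.2; have hz := z.2
  rw [Fin.ne_iff_vne] at nxy nxz nyz
  rcases hxy with h | h <;> rcases modlem (by omega) h with h1 | h1 <;> clear h <;>
  rcases hxz with h | h <;> rcases modlem (by omega) h with h2 | h2 <;> clear h <;>
  rcases hyz with h | h <;> rcases modlem (by omega) h with h3 | h3 <;> clear h <;>
  omega

lemma prism_tri {m : ℕ} (hm : 4 ≤ m) {x y z : Fin m × Fin 2}
    (hxy : (prism m).Adj x y) (hxz : (prism m).Adj x z)
    (hyz : (prism m).Adj y z) : False := by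
  simp only [prism, SimpleGraph.boxProd_adj, SimpleGraph.top_adj] at hxy hxz hyz
  have h2x := x.2.2; have h2y := y.2.2; have h2z := z.2.2
  rcases hxy with ⟨a1, e1⟩ | ⟨e1, a1⟩ <;> rcases hxz with ⟨a2, e2⟩ | ⟨e2, a2⟩ <;>
    rcases hyz with ⟨a3, e3⟩ | ⟨e3, a3⟩
  · exact cycle_tri hm a1 a2 a3
  · exact e3 (e1.symm.trans e2)
  · exact e2 (e1.trans e3)
  · exact (cycleG m).ne_of_adj a1 (a2.trans a3.symm)
  · exact e1 (e2.trans e3.symm)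
  · exact (cycleG m).ne_of_adj a2 (a1.trans a3)
  · exact (cycleG m).ne_of_adj a3 (a1.symm.trans a2)
  · rw [Fin.ne_iff_vne] at e1 e2 e3; omega

theorem stmt9 (m : ℕ) (hm : 4 ≤ m) :
    (prism m).CliqueFree 3 ∧ (joinG (⊥ : SimpleGraph (Fin 2)) (prism m)).CliqueFree 4 := by
  have htri : (prism m).CliqueFree 3 := by
    intro s hs
    rw [SimpleGraph.is3Clique_iff] at hs
    obtain ⟨a, b, c, hab, hac, hbc, -⟩ := hs
    exact prism_tri hm hab hac hbc
  refine ⟨htri, ?_⟩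
  intro s hs
  obtain ⟨hclq, hcard⟩ := hs
  obtain ⟨a, ha⟩ : ∃ a, a ∈ s := Finset.card_pos.mp (by omega)
  have hcard' : (s.erase a).card = 3 := by
    rw [Finset.card_erase_of_mem ha, hcard]
  obtain ⟨b, c, d, hbc, hbd, hcd, habc⟩ := Finset.card_eq_three.mp hcard'
  have hb' : b ∈ s.erase a := by rw [habc]; simp
  have hc' : c ∈ s.erase a := by rw [habc]; simp
  have hd' : d ∈ s.erase a := by rw [habc]; simp
  have hb : b ∈ s := Finset.mem_of_mem_erase hb'
  have hc : c ∈ s := Finset.mem_of_mem_erase hc'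
  have hd : d ∈ s := Finset.mem_of_mem_erase hd'
  have hab : a ≠ b := fun h => Finset.ne_of_mem_erase hb' h.symm
  have hac : a ≠ c := fun h => Finset.ne_of_mem_erase hc' h.symm
  have had : a ≠ d := fun h => Finset.ne_of_mem_erase hd' h.symm
  have A1 := hclq ha hb hab
  have A2 := hclq ha hc hac
  have A3 := hclq ha hd had
  have A4 := hclq hb hc hbc
  have A5 := hclq hb hd hbd
  have A6 := hclq hc hd hcd
  clear hclq hcard hcard' habc ha hb hc hd
  rcases a with a | a <;> rcases b with b | b <;> rcases c with c | c <;> rcases d with d | d <;>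
    simp only [joinG] at A1 A2 A3 A4 A5 A6 <;>
    first
      | exact A1 | exact A2 | exact A3 | exact A4 | exact A5 | exact A6
      | exact prism_tri hm A4 A5 A6
      | exact prism_tri hm A2 A3 A6
      | exact prism_tri hm A1 A3 A5
      | exact prism_tri hm A1 A2 A4
end

section
/- Let G be a connected graph with Perron vector x (ℓ∞-norm 1) and let v be a vertex with x_v < 1/λ(G). Let u be a vertex with x_u = 1, u ≠ v, u not adjacent to v. Then the graph G' obtained from G by deleting all edges incident to v and adding the single edge uv satisfies λ(G') > λ(G). -/
open SimpleGraph Matrix Finset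

open scoped Classical in
lemma adjM_apply' {V : Type*} [Fintype V] [DecidableEq V] (G : SimpleGraph V) (a b : V) :
    adjM G a b = if G.Adj a b then 1 else 0 := by
  unfold adjM
  rw [SimpleGraph.adjMatrix_apply]

lemma rayleigh_le' {m : ℕ} (A : Matrix (Fin m) (Fin m) ℝ) (hA : A.IsHermitian)
    (lam : ℝ)
    (hub : ∀ μ : ℝ, (∃ w : Fin m → ℝ, w ≠ 0 ∧ A.mulVec w = μ • w) → μ ≤ lam)
    (x : Fin m → ℝ) : x ⬝ᵥ (A *ᵥ x) ≤ lam * (x ⬝ᵥ x) := by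
  have heig : ∀ j, hA.eigenvalues j ≤ lam := by
    intro j
    apply hub
    refine ⟨⇑(hA.eigenvectorBasis j), ?_, hA.mulVec_eigenvectorBasis j⟩
    intro h0
    have h1 : ‖hA.eigenvectorBasis j‖ = 1 := hA.eigenvectorBasis.orthonormal.1 j
    have h2 : (hA.eigenvectorBasis j : EuclideanSpace ℝ (Fin m)) = 0 := by
      ext i; exact congrFun h0 i
    rw [h2] at h1; simp at h1
  set U : Matrix (Fin m) (Fin m) ℝ := (hA.eigenvectorUnitary : Matrix (Fin m) (Fin m) ℝ) with hU
  have hUU : U * star U = 1 := mem_unitaryGroup_iff.mp hA.eigenvectorUnitary.2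
  have hstar : star U = Uᵀ := by
    ext i j
    simp [Matrix.star_eq_conjTranspose, Matrix.conjTranspose_apply]
  set y : Fin m → ℝ := star U *ᵥ x with hy
  have hvec : x ᵥ* U = y := by
    rw [hy, hstar, Matrix.mulVec_transpose]
  have hdiag : Matrix.diagonal (RCLike.ofReal ∘ hA.eigenvalues)
      = Matrix.diagonal hA.eigenvalues := by
    congr 1
  have hquad : x ⬝ᵥ (A *ᵥ x) = ∑ i, hA.eigenvalues i * (y i * y i) := by
    conv_lhs => rw [hA.spectral_theorem]
    rw [Unitary.conjStarAlgAut_apply, hdiag, ← Matrix.mulVec_mulVec, ← Matrix.mulVec_mulVec, Matrix.dotProduct_mulVec, hvec,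
      ← hy]
    simp [dotProduct, Matrix.mulVec_diagonal]
    exact Finset.sum_congr rfl (fun i _ => by ring)
  have hnorm : x ⬝ᵥ x = ∑ i, y i * y i := by
    have h3 : y ⬝ᵥ y = x ⬝ᵥ x := by
      rw [show y ⬝ᵥ y = y ⬝ᵥ (star U *ᵥ x) from rfl, Matrix.dotProduct_mulVec, ← hvec,
        Matrix.vecMul_vecMul, hUU, Matrix.vecMul_one]
    rw [← h3]; rfl
  rw [hquad, hnorm, Finset.mul_sum]
  apply Finset.sum_le_sum
  intro i _
  exact mul_le_mul_of_nonneg_right (heig i) (mul_self_nonneg _)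

theorem stmt12 {n : ℕ} (G : SimpleGraph (Fin n)) (hconn : G.Connected)
    (lam : ℝ) (hlam : IsSpecRad G lam)
    (x : Fin n → ℝ) (hpos : ∀ i, 0 < x i) (hev : (adjM G).mulVec x = lam • x)
    (hle : ∀ i, x i ≤ 1)
    (u v : Fin n) (huv : u ≠ v) (hadj : ¬ G.Adj u v) (hxu : x u = 1) (hxv : x v < 1 / lam)
    (G' : SimpleGraph (Fin n))
    (hG' : ∀ a b, G'.Adj a b ↔
      ((a ≠ v ∧ b ≠ v ∧ G.Adj a b) ∨ (a = u ∧ b = v) ∨ (a = v ∧ b = u)))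
    (lam' : ℝ) (hlam' : IsSpecRad G' lam') :
    lam < lam' := by
  have hlampos : 0 < lam := by
    by_contra h
    push_neg at h
    have h1 : 1 / lam ≤ 0 := one_div_nonpos.mpr h
    linarith [hpos v]
  have hsym : ∀ a b : Fin n, adjM G a b = adjM G b a := by
    intro a b; rw [adjM_apply', adjM_apply']; classical exact if_congr (G.adj_comm a b) rfl rfl
  have hAx : ∀ a, (adjM G *ᵥ x) a = lam * x a := by
    intro a; have := congrFun hev a; simpa using this
  have hAxv : ∑ b, adjM G v b * x b = lam * x v := by
    have h := hAx v
    simpa [Matrix.mulVec, dotProduct] using h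
  have hvu : ¬ G.Adj v u := fun h => hadj h.symm
  have hA'entry : ∀ a b, adjM G' a b
      = adjM G a b - (if a = v then (1:ℝ) else 0) * adjM G a b
        - (if b = v then (1:ℝ) else 0) * adjM G a b
        + (if a = u ∧ b = v then 1 else 0) + (if a = v ∧ b = u then 1 else 0) := by
    intro a b
    rw [adjM_apply', adjM_apply']
    by_cases hav : a = v <;> by_cases hbv : b = v <;>
      by_cases hau : a = u <;> by_cases hbu : b = u <;>
      subst_vars <;> simp_all [hG'] <;> split_ifs <;> simp_all <;> ring
  have hrow : ∀ a, (adjM G' *ᵥ x) a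
      = (adjM G *ᵥ x) a - (if a = v then (1:ℝ) else 0) * (adjM G *ᵥ x) a
        - adjM G a v * x v + (if a = u then x v else 0) + (if a = v then x u else 0) := by
    intro a
    simp only [Matrix.mulVec, dotProduct]
    have key : ∀ b, adjM G' a b * x b
        = adjM G a b * x b - (if a = v then (1:ℝ) else 0) * (adjM G a b * x b)
          - (if b = v then adjM G a v * x v else 0)
          + (if b = v then (if a = u then x v else 0) else 0)
          + (if b = u then (if a = v then x u else 0) else 0) := by
      intro b
      rw [hA'entry a b]
      by_cases hav : a = v <;> by_cases hbv : b = v <;> by_cases hau : a = u <;>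
        by_cases hbu : b = u <;> subst_vars <;> simp_all [adjM_apply'] <;> ring
    rw [Finset.sum_congr rfl (fun b _ => key b)]
    simp [Finset.sum_sub_distrib, Finset.sum_add_distrib, Finset.mul_sum]
  have hcolv : ∑ a, x a * (adjM G a v * x v) = x v * (lam * x v) := by
    have h : ∀ a, x a * (adjM G a v * x v) = x v * (adjM G v a * x a) := fun a => by
      rw [hsym a v]; ring
    rw [Finset.sum_congr rfl (fun a _ => h a), ← Finset.mul_sum, hAxv]
  have hQ' : x ⬝ᵥ (adjM G' *ᵥ x) = x ⬝ᵥ (adjM G *ᵥ x) + 2 * x v * (1 - lam * x v) := by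
    have lhs : x ⬝ᵥ (adjM G' *ᵥ x) = ∑ a, x a * (adjM G' *ᵥ x) a := rfl
    have rhs : x ⬝ᵥ (adjM G *ᵥ x) = ∑ a, x a * (adjM G *ᵥ x) a := rfl
    rw [lhs, rhs, Finset.sum_congr rfl (fun a _ => by rw [hrow a])]
    simp only [mul_sub, mul_add, Finset.sum_sub_distrib, Finset.sum_add_distrib]
    have e1 : ∑ a, x a * ((if a = v then (1:ℝ) else 0) * (adjM G *ᵥ x) a)
        = x v * (lam * x v) := by
      rw [Finset.sum_congr rfl (fun a _ =>
        show x a * ((if a = v then (1:ℝ) else 0) * (adjM G *ᵥ x) a)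
          = if a = v then x a * (adjM G *ᵥ x) a else 0 from by split_ifs <;> ring)]
      simp [hAx]
    have e2 : ∑ a, x a * (if a = u then x v else 0) = x v := by
      rw [Finset.sum_congr rfl (fun a _ =>
        show x a * (if a = u then x v else 0) = if a = u then x a * x v else 0 from by
          split_ifs <;> ring)]
      simp [hxu]
    have e3 : ∑ a, x a * (if a = v then x u else 0) = x v := by
      rw [Finset.sum_congr rfl (fun a _ =>
        show x a * (if a = v then x u else 0) = if a = v then x a * x u else 0 from by
          split_ifs <;> ring)]
      simp [hxu]
    rw [e1, e2, e3, hcolv]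
    ring
  have hherm : (adjM G').IsHermitian := by
    ext i j
    simp only [Matrix.conjTranspose_apply, adjM_apply', star_trivial]
    classical exact if_congr (G'.adj_comm j i) rfl rfl
  have hray : x ⬝ᵥ (adjM G' *ᵥ x) ≤ lam' * (x ⬝ᵥ x) :=
    rayleigh_le' (adjM G') hherm lam' (fun μ hμ => hlam'.2 hμ) x
  have hS : 0 < x ⬝ᵥ x :=
    Finset.sum_pos (fun i _ => mul_pos (hpos i) (hpos i)) ⟨u, Finset.mem_univ u⟩
  have hQ : x ⬝ᵥ (adjM G *ᵥ x) = lam * (x ⬝ᵥ x) := by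
    rw [hev]
    simp [dotProduct, Finset.mul_sum]
    exact Finset.sum_congr rfl (fun i _ => by ring)
  have hlt1 : lam * x v < 1 := by
    have := (lt_div_iff₀ hlampos).mp hxv
    nlinarith
  have hgain : 0 < 2 * x v * (1 - lam * x v) := by
    have := hpos v
    nlinarith
  have hfin : lam * (x ⬝ᵥ x) < lam' * (x ⬝ᵥ x) := by
    rw [← hQ]
    calc x ⬝ᵥ (adjM G *ᵥ x) < x ⬝ᵥ (adjM G' *ᵥ x) := by rw [hQ']; linarith
      _ ≤ lam' * (x ⬝ᵥ x) := hray
  exact (mul_lt_mul_iff_left₀ hS).mp hfin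
end

section
/- For m ≥ 6 even, the graph QP_m, obtained from P_m^{2+} by removing the edges v_{2i}v_{2i+1} for all 1 ≤ i ≤ (m-2)/2, is triangle-free. -/
open SimpleGraph Matrix Finset

/-- `QP_m`: obtained from `P_m^{2+}` (path `v_1 … v_m` plus chords `v_i v_{i+2}` and edge
`v_1 v_m`) by deleting the path edges `v_{2i} v_{2i+1}`; with `Fin m` indexing (`v_k ↦ k-1`),
the remaining path edges are those from an even index. -/
def QP (m : ℕ) : SimpleGraph (Fin m) :=
  SimpleGraph.fromRel (fun i j =>
    (i.val % 2 = 0 ∧ i.val + 1 = j.val) ∨ i.val + 2 = j.val ∨ (i.val = 0 ∧ j.val = m - 1))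

theorem stmt13 (m : ℕ) (hm : 6 ≤ m) (he : Even m) : (QP m).CliqueFree 3 := by
  intro t ht
  obtain ⟨ht1, ht2⟩ := ht
  rw [Finset.card_eq_three] at ht2
  obtain ⟨a, b, c, hab, hac, hbc, rfl⟩ := ht2
  have Hab := ht1 (by simp) (by simp) hab
  have Hac := ht1 (by simp) (by simp) hac
  have Hbc := ht1 (by simp) (by simp) hbc
  simp only [QP, SimpleGraph.fromRel_adj, ne_eq, Fin.ext_iff] at Hab Hac Hbc
  obtain ⟨k, rfl⟩ := he
  have := a.isLt
  have := b.isLt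
  have := c.isLt
  omega
end
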